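/- Let X be a Hermitian operator on ℂ^d ⊗ ℂ^D. Then X = 1_d ⊗ J for some Hermitian D×D matrix J if and only if for every vector ψ ∈ ℂ^D the partial expectation ⟨ψ|X|ψ⟩_E is a scalar multiple of the identity 1_d. -/

import Mathlib

open Matrix Complex
open scoped Kronecker

/-- The partial expectation `⟨ψ|X|ψ⟩_E` of an operator `X` on `ℂ^d ⊗ ℂ^D`
with respect to an environment vector `ψ ∈ ℂ^D`. -/
noncomputable def pexp {d D : ℕ} (X : Matrix (Fin d × Fin D) (Fin d × Fin D) ℂ)
    (ψ : Fin D → ℂ) : Matrix (Fin d) (Fin d) ℂ :=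
  fun i j => ∑ a, ∑ b, star (ψ a) * X (i, a) (j, b) * ψ b

/-! Entry `(i, j)` of `⟨ψ|X|ψ⟩_E` is the quadratic form `ψ ↦ ψᴴ Xᵢⱼ ψ` of the block `Xᵢⱼ`, and over
`ℂ` a matrix is determined by its quadratic form (polarization). So the partial expectations are
all scalar exactly when the off-diagonal blocks vanish and the diagonal blocks coincide; the common
diagonal block `J` is Hermitian as a principal submatrix of `X`. -/

namespace Matrix

variable {m n α : Type*}

theorem ext_of_forall_star_dotProduct_mulVec_self [Fintype n] [DecidableEq n]
    {A B : Matrix n n ℂ} (h : ∀ v, star v ⬝ᵥ A *ᵥ v = star v ⬝ᵥ B *ᵥ v) : A = B := by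
  refine toEuclideanLin.injective <| (ext_inner_map _ _).1 fun x => ?_
  rw [← inner_conj_symm, ← inner_conj_symm (toEuclideanLin B x)]
  simp only [EuclideanSpace.inner_eq_star_dotProduct, ofLp_toLpLin, toLin'_apply]
  rw [dotProduct_comm, h, dotProduct_comm]

variable [DecidableEq m] [Semiring α]

theorem submatrix_one_kronecker (J : Matrix n n α) (i j : m) :
    ((1 : Matrix m m α) ⊗ₖ J).submatrix (Prod.mk i) (Prod.mk j) = (1 : Matrix m m α) i j • J :=
  rfl

theorem eq_one_kronecker_of_submatrix {X : Matrix (m × n) (m × n) α} {J : Matrix n n α}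
    (h : ∀ i j, X.submatrix (Prod.mk i) (Prod.mk j) = (1 : Matrix m m α) i j • J) :
    X = 1 ⊗ₖ J := by
  ext ⟨i, a⟩ ⟨j, b⟩
  exact congr_fun₂ (h i j) a b

end Matrix

section PartialExpectation

variable {d D : ℕ}

theorem pexp_apply (X : Matrix (Fin d × Fin D) (Fin d × Fin D) ℂ) (ψ : Fin D → ℂ) (i j : Fin d) :
    pexp X ψ i j = star ψ ⬝ᵥ X.submatrix (Prod.mk i) (Prod.mk j) *ᵥ ψ := by
  simp [pexp, dotProduct, mulVec, Finset.mul_sum, mul_assoc]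

theorem pexp_one_kronecker (J : Matrix (Fin D) (Fin D) ℂ) (ψ : Fin D → ℂ) :
    pexp ((1 : Matrix (Fin d) (Fin d) ℂ) ⊗ₖ J) ψ = (star ψ ⬝ᵥ J *ᵥ ψ) • 1 := by
  ext i j
  rw [pexp_apply, submatrix_one_kronecker, smul_mulVec, dotProduct_smul, Matrix.smul_apply,
    smul_eq_mul, smul_eq_mul, mul_comm]

theorem submatrix_eq_of_forall_pexp_eq_smul_one {X : Matrix (Fin d × Fin D) (Fin d × Fin D) ℂ}
    (h : ∀ ψ, ∃ c : ℂ, pexp X ψ = c • 1) (i j i₀ : Fin d) :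
    X.submatrix (Prod.mk i) (Prod.mk j) =
      (1 : Matrix (Fin d) (Fin d) ℂ) i j • X.submatrix (Prod.mk i₀) (Prod.mk i₀) := by
  refine ext_of_forall_star_dotProduct_mulVec_self fun ψ => ?_
  obtain ⟨c, hc⟩ := h ψ
  rw [smul_mulVec, dotProduct_smul, ← pexp_apply, ← pexp_apply, hc]
  simp [one_apply, mul_comm]

end PartialExpectation

theorem stmt_4 {d D : ℕ}
    (X : Matrix (Fin d × Fin D) (Fin d × Fin D) ℂ) (hX : X.IsHermitian) :
    (∃ J : Matrix (Fin D) (Fin D) ℂ, J.IsHermitian ∧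
        X = (1 : Matrix (Fin d) (Fin d) ℂ) ⊗ₖ J) ↔
      (∀ ψ : Fin D → ℂ, ∃ c : ℂ, pexp X ψ = c • (1 : Matrix (Fin d) (Fin d) ℂ)) := by
  constructor
  · rintro ⟨J, -, rfl⟩ ψ
    exact ⟨_, pexp_one_kronecker J ψ⟩
  · intro h
    rcases isEmpty_or_nonempty (Fin d) with _ | ⟨⟨i₀⟩⟩
    · refine ⟨0, isHermitian_zero, ?_⟩
      ext ⟨i, _⟩
      exact isEmptyElim i
    · exact ⟨_, hX.submatrix (Prod.mk i₀),
        eq_one_kronecker_of_submatrix fun i j => submatrix_eq_of_forall_pexp_eq_smul_one h i j i₀⟩
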